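/- Let Δ > 0 and W > 0 satisfy W < 1/(2Δ), and let C₀ be a nonzero complex number. Let h : ℝ → ℂ be a Schwartz function whose Fourier transform 𝓕h vanishes for all f with |f| ≥ W. Let V : ℝ → ℂ be an integrable bounded function with V(f) = C₀ for all |f| ≤ W and V(f) = 0 for all |f| ≥ 1/Δ − W, and define v : ℝ → ℂ by v(t) = ∫_ℝ V(f) e^{2πi f t} df. Then for every t ∈ ℝ, h(t) = ∑_{n ∈ ℤ} (Δ/C₀) · h(nΔ) · v(t − nΔ), where the series converges absolutely. -/

import Mathlib

/-!
Sampling `h` with step `Δ` periodizes its spectrum: by Poisson summation,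
`∑ₙ h(nΔ) e^{-2πi f nΔ} = Δ⁻¹ ∑ₖ 𝓕h(f + k/Δ)`. For `|f| < 1/Δ - W` every alias with `k ≠ 0` lies
outside the band `[-W, W]`, so the sum is `Δ⁻¹ 𝓕h(f)`; for the other `f`, `V` vanishes. As `V` is
flat on the band, `V · 𝓕h = C₀ 𝓕h`. The samples are absolutely summable and `v` is bounded by
`‖V‖₁`, so the series `∑ₙ (Δ/C₀) h(nΔ) v(t - nΔ)` can be written as a single integral, which is the
inverse Fourier transform of `𝓕h` at `t`, i.e. `h(t)`.
-/

open MeasureTheory Complex Real FourierTransform Filter Asymptotics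

theorem Real.fourier_comp_mul_right {E : Type*} [NormedAddCommGroup E] [NormedSpace ℂ E]
    (g : ℝ → E) {Δ : ℝ} (hΔ : Δ ≠ 0) (ξ : ℝ) :
    𝓕 (fun x => g (x * Δ)) ξ = |Δ⁻¹| • 𝓕 g (ξ / Δ) := by
  simp only [Real.fourier_real_eq]
  rw [← Measure.integral_comp_mul_right (fun y => 𝐞 (-(y * (ξ / Δ))) • g y)]
  congr! 4 with x
  field_simp

theorem Real.fourier_fourierChar_smul {E : Type*} [NormedAddCommGroup E] [NormedSpace ℂ E]
    (g : ℝ → E) (a ξ : ℝ) :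
    𝓕 (fun x => 𝐞 (-(x * a)) • g x) ξ = 𝓕 g (ξ + a) := by
  simp only [Real.fourier_real_eq, smul_smul, ← AddChar.map_add_eq_mul]
  congr! 4 with x
  ring

theorem Real.fourierInv_real_eq {E : Type*} [NormedAddCommGroup E] [NormedSpace ℂ E]
    (g : ℝ → E) (w : ℝ) : 𝓕⁻ g w = ∫ v : ℝ, 𝐞 (v * w) • g v := by
  simp [Real.fourierInv_eq, mul_comm]

theorem Asymptotics.IsBigO.comp_mul_right_rpow {E : Type*} [NormedAddCommGroup E] {g : ℝ → E}
    {b : ℝ} (hg : g =O[cocompact ℝ] (|·| ^ b)) {Δ : ℝ} (hΔ : Δ ≠ 0) :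
    (fun x => g (x * Δ)) =O[cocompact ℝ] (|·| ^ b) := by
  refine (hg.comp_tendsto (tendsto_cocompact_mul_right₀ hΔ)).trans ?_
  have : (fun x : ℝ => |x * Δ| ^ b) = fun x => |Δ| ^ b * |x| ^ b := by
    ext x; rw [abs_mul, Real.mul_rpow (abs_nonneg _) (abs_nonneg _), mul_comm]
  rw [Function.comp_def, this]
  exact (isBigO_refl _ _).const_mul_left _

theorem summable_norm_comp_mul_right_of_rpow_decay {E : Type*} [NormedAddCommGroup E]
    {g : ℝ → E} {b : ℝ} (hb : 1 < b) (hg : g =O[cocompact ℝ] (|·| ^ (-b))) {Δ : ℝ}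
    (hΔ : Δ ≠ 0) : Summable fun n : ℤ => ‖g (n * Δ)‖ :=
  summable_of_isBigO (Real.summable_abs_int_rpow hb)
    ((hg.comp_mul_right_rpow hΔ).norm_left.comp_tendsto Int.tendsto_coe_cofinite)

theorem Real.tsum_eq_fourier_zero_of_rpow_decay {g : ℝ → ℂ} (hc : Continuous g) {b : ℝ}
    (hb : 1 < b) (hg : g =O[cocompact ℝ] (|·| ^ (-b)))
    (hband : ∀ ξ : ℝ, 1 ≤ |ξ| → 𝓕 g ξ = 0) :
    ∑' n : ℤ, g n = 𝓕 g 0 := by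
  have hvanish : ∀ n : ℤ, n ≠ 0 → 𝓕 g n = 0 := fun n hn =>
    hband n (by exact_mod_cast Int.one_le_abs hn)
  have hsum : Summable fun n : ℤ => 𝓕 g n :=
    summable_of_ne_finset_zero (s := {0}) fun n hn => hvanish n (by simpa using hn)
  have := Real.tsum_eq_tsum_fourier_of_rpow_decay_of_summable hc hb hg hsum 0
  simp only [zero_add] at this
  rw [this, tsum_eq_single 0 fun n hn => by rw [hvanish n hn, zero_mul]]
  simp

theorem Real.tsum_comp_mul_right_eq_fourier_zero_of_rpow_decay {g : ℝ → ℂ} (hc : Continuous g)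
    {b : ℝ} (hb : 1 < b) (hg : g =O[cocompact ℝ] (|·| ^ (-b))) {Δ : ℝ} (hΔ : 0 < Δ)
    (hband : ∀ ξ : ℝ, 1 / Δ ≤ |ξ| → 𝓕 g ξ = 0) :
    ∑' n : ℤ, g (n * Δ) = Δ⁻¹ • 𝓕 g 0 := by
  have hF := Real.fourier_comp_mul_right g hΔ.ne'
  have := Real.tsum_eq_fourier_zero_of_rpow_decay (g := fun x => g (x * Δ)) (by fun_prop) hb
    (hg.comp_mul_right_rpow hΔ.ne') fun ξ hξ => by
      rw [hF, hband, smul_zero]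
      rwa [abs_div, abs_of_pos hΔ, div_le_div_iff_of_pos_right hΔ]
  rw [this, hF, zero_div, abs_of_pos (inv_pos.2 hΔ)]

theorem Real.tsum_fourierChar_smul_comp_mul_right_of_rpow_decay {g : ℝ → ℂ}
    (hc : Continuous g) {b : ℝ} (hb : 1 < b) (hg : g =O[cocompact ℝ] (|·| ^ (-b))) {W Δ : ℝ}
    (hΔ : 0 < Δ) (hband : ∀ ξ : ℝ, W ≤ |ξ| → 𝓕 g ξ = 0) {f : ℝ} (hf : |f| < 1 / Δ - W) :
    ∑' n : ℤ, 𝐞 (-(n * Δ * f)) • g (n * Δ) = Δ⁻¹ • 𝓕 g f := by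
  have hmod := Real.fourier_fourierChar_smul g f
  have := Real.tsum_comp_mul_right_eq_fourier_zero_of_rpow_decay (g := fun x => 𝐞 (-(x * f)) • g x)
    (by fun_prop) hb ?_ hΔ fun ξ hξ => ?_
  · rwa [hmod, zero_add] at this
  · refine (isBigO_of_le _ fun x => ?_).trans hg
    rw [Circle.norm_smul]
  · rw [hmod, hband]
    have := abs_sub_abs_le_abs_sub ξ (-f)
    rw [abs_neg, sub_neg_eq_add] at this
    linarith

theorem Real.norm_fourierInv_le_integral_norm {E : Type*} [NormedAddCommGroup E]
    [NormedSpace ℂ E] (V : ℝ → E) (x : ℝ) :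
    ‖𝓕⁻ V x‖ ≤ ∫ f, ‖V f‖ :=
  VectorFourier.norm_fourierIntegral_le_integral_norm _ _ _ _ _

theorem summable_norm_mul_fourierInv_sub {ι : Type*} (V : ℝ → ℂ) {a : ι → ℂ}
    (ha : Summable (‖a ·‖)) (s : ι → ℝ) (t : ℝ) :
    Summable fun n => ‖a n * 𝓕⁻ V (t - s n)‖ :=
  (ha.mul_right (∫ f, ‖V f‖)).of_nonneg_of_le (fun _ => norm_nonneg _) fun n => by
    rw [norm_mul]
    exact mul_le_mul_of_nonneg_left (Real.norm_fourierInv_le_integral_norm V _) (norm_nonneg _)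

theorem Real.integrable_fourierChar_smul {E : Type*} [NormedAddCommGroup E] [NormedSpace ℂ E]
    {V : ℝ → E} (hV : Integrable V) (t : ℝ) :
    Integrable fun f => 𝐞 (f * t) • V f :=
  hV.norm.mono' (by fun_prop) (ae_of_all _ fun f => (Circle.norm_smul _ _).le)

theorem tsum_mul_fourierInv_sub {ι : Type*} [Countable ι] {V : ℝ → ℂ} (hV : Integrable V)
    {a : ι → ℂ} (ha : Summable (‖a ·‖)) (s : ι → ℝ) (t : ℝ) :
    ∑' n, a n * 𝓕⁻ V (t - s n) = 𝓕⁻ (fun f => V f * ∑' n, 𝐞 (-(s n * f)) • a n) t := by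
  have hterm : ∀ f, 𝐞 (f * t) • (V f * ∑' n, 𝐞 (-(s n * f)) • a n)
      = ∑' n, a n * 𝐞 (f * (t - s n)) • V f := fun f => by
    simp only [Circle.smul_def, smul_eq_mul, ← tsum_mul_left]
    congr 1 with n
    rw [mul_sub, sub_eq_add_neg, AddChar.map_add_eq_mul, Circle.coe_mul, mul_comm (s n) f]
    ring
  have hnorm : ∀ n, ∫ f, ‖a n * 𝐞 (f * (t - s n)) • V f‖ = ‖a n‖ * ∫ f, ‖V f‖ := fun n => by
    simp only [norm_mul, Circle.norm_smul, integral_const_mul]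
  rw [Real.fourierInv_real_eq, integral_congr_ae (ae_of_all _ hterm),
    ← integral_tsum_of_summable_integral_norm
      (fun n => (Real.integrable_fourierChar_smul hV _).const_mul _)
      (by simpa only [hnorm] using ha.mul_right _)]
  simp only [Real.fourierInv_real_eq, integral_const_mul]

theorem SchwartzMap.mul_tsum_fourierChar_smul_samples_eq_fourier (h : SchwartzMap ℝ ℂ) {Δ W : ℝ}
    (hΔ : 0 < Δ) {C₀ : ℂ} (hC₀ : C₀ ≠ 0) (hband : ∀ ξ : ℝ, W ≤ |ξ| → 𝓕 (⇑h) ξ = 0) {V : ℝ → ℂ}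
    (hVC : ∀ ξ : ℝ, |ξ| ≤ W → V ξ = C₀) (hV0 : ∀ ξ : ℝ, 1 / Δ - W ≤ |ξ| → V ξ = 0) (f : ℝ) :
    V f * ∑' n : ℤ, 𝐞 (-(n * Δ * f)) • (Δ / C₀ * h (n * Δ)) = 𝓕 (⇑h) f := by
  have hflat : V f * 𝓕 (⇑h) f = C₀ * 𝓕 (⇑h) f := by
    rcases le_total |f| W with hf | hf
    · rw [hVC f hf]
    · rw [hband f hf, mul_zero, mul_zero]
  by_cases hVf : V f = 0
  · rw [hVf, zero_mul] at hflat ⊢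
    exact ((mul_eq_zero.1 hflat.symm).resolve_left hC₀).symm
  have hf : |f| < 1 / Δ - W := not_le.1 (mt (hV0 f) hVf)
  simp only [← mul_smul_comm, tsum_mul_left]
  rw [Real.tsum_fourierChar_smul_comp_mul_right_of_rpow_decay h.continuous one_lt_two
    (h.isBigO_cocompact_rpow (-2)) hΔ hband hf, Complex.real_smul, Complex.ofReal_inv]
  rw [show V f * (Δ / C₀ * ((Δ : ℂ)⁻¹ * 𝓕 (⇑h) f)) = V f * 𝓕 (⇑h) f / C₀ * (Δ * (Δ : ℂ)⁻¹)
    by ring, hflat, mul_inv_cancel₀ (by exact_mod_cast hΔ.ne'), mul_one,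
    mul_div_cancel_left₀ _ hC₀]

theorem ftn_orthonormal_expansion_general
    (Δ W : ℝ) (hΔ : 0 < Δ)
    (C₀ : ℂ) (hC₀ : C₀ ≠ 0)
    (h : SchwartzMap ℝ ℂ)
    (hband : ∀ f : ℝ, W ≤ |f| → (FourierTransform.fourier (⇑h : ℝ → ℂ) : ℝ → ℂ) f = 0)
    (V : ℝ → ℂ) (hVint : Integrable V)
    (hVC : ∀ f : ℝ, |f| ≤ W → V f = C₀)
    (hV0 : ∀ f : ℝ, 1 / Δ - W ≤ |f| → V f = 0)
    (v : ℝ → ℂ)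
    (hv : ∀ t : ℝ, v t = ∫ f : ℝ, V f * Complex.exp (2 * Real.pi * Complex.I * f * t)) :
    ∀ t : ℝ,
      Summable (fun n : ℤ => ‖((Δ : ℂ) / C₀) * h ((n : ℝ) * Δ) * v (t - (n : ℝ) * Δ)‖) ∧
      h t = ∑' n : ℤ, ((Δ : ℂ) / C₀) * h ((n : ℝ) * Δ) * v (t - (n : ℝ) * Δ) := by
  intro t
  have hv' : v = 𝓕⁻ V := funext fun s => by
    rw [hv, Real.fourierInv_real_eq]
    congr with f
    rw [Circle.smul_def, Real.fourierChar_apply, smul_eq_mul, mul_comm]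
    push_cast
    ring_nf
  have ha : Summable fun n : ℤ => ‖(Δ : ℂ) / C₀ * h (n * Δ)‖ := by
    simpa only [norm_mul] using (summable_norm_comp_mul_right_of_rpow_decay one_lt_two
      (h.isBigO_cocompact_rpow (-2)) hΔ.ne').mul_left ‖(Δ : ℂ) / C₀‖
  rw [hv']
  refine ⟨summable_norm_mul_fourierInv_sub V ha _ t, ?_⟩
  rw [tsum_mul_fourierInv_sub hVint ha,
    funext (h.mul_tsum_fourierChar_smul_samples_eq_fourier hΔ hC₀ hband hVC hV0),
    ← SchwartzMap.fourier_coe, ← SchwartzMap.fourierInv_coe, FourierPair.fourierInv_fourier_eq]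

/-- Lemma 1 of the paper: a bandlimited `T`-orthogonal pulse `h` can be expanded as
`h(t) = ∑ₙ (Δ/C₀) h(nΔ) v(t - nΔ)` where `v` is the inverse Fourier transform of a
function `V` which is flat (equal to `C₀`) on the band `[-W, W]` of `h` and vanishes
outside `|f| < 1/Δ - W`. -/
theorem ftn_orthonormal_expansion
    (Δ W : ℝ) (hΔ : 0 < Δ) (hW : 0 < W) (hWΔ : W < 1 / (2 * Δ))
    (C₀ : ℂ) (hC₀ : C₀ ≠ 0)
    (h : SchwartzMap ℝ ℂ)
    (hband : ∀ f : ℝ, W ≤ |f| → (FourierTransform.fourier (⇑h : ℝ → ℂ) : ℝ → ℂ) f = 0)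
    (V : ℝ → ℂ) (hVint : Integrable V)
    (hVbdd : ∃ M : ℝ, ∀ f : ℝ, ‖V f‖ ≤ M)
    (hVC : ∀ f : ℝ, |f| ≤ W → V f = C₀)
    (hV0 : ∀ f : ℝ, 1 / Δ - W ≤ |f| → V f = 0)
    (v : ℝ → ℂ)
    (hv : ∀ t : ℝ, v t = ∫ f : ℝ, V f * Complex.exp (2 * Real.pi * Complex.I * f * t)) :
    ∀ t : ℝ,
      Summable (fun n : ℤ => ‖((Δ : ℂ) / C₀) * h ((n : ℝ) * Δ) * v (t - (n : ℝ) * Δ)‖) ∧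
      h t = ∑' n : ℤ, ((Δ : ℂ) / C₀) * h ((n : ℝ) * Δ) * v (t - (n : ℝ) * Δ) :=
  ftn_orthonormal_expansion_general Δ W hΔ C₀ hC₀ h hband V hVint hVC hV0 v hv
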